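/- Fix an integer n ≥ 3 and 0 < h < 1/2. If (δ,γ) solves the system at (n,h), then there exists v ∈ W_h, not identically zero, such that ∫₀¹ r^{n−1}·v'(r)² dr = (S^n + δ²)·∫₀¹ r^{n−3}·v(r)² dr; in particular μ_h^n ≤ S^n + δ². -/

import Mathlib

open MeasureTheory Real Set Filter

noncomputable section

/-- `u ∈ H¹(0,1)` with weak derivative `u'`: `u` is continuous on `[0,1]`,
`u'` is (square-)integrable on `(0,1)`, and `u(x) = u(0) + ∫₀ˣ u'`. -/
def IsH1 (u u' : ℝ → ℝ) : Prop :=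
  ContinuousOn u (Set.Icc 0 1) ∧
  IntervalIntegrable u' volume 0 1 ∧
  IntegrableOn (fun t => u' t ^ 2) (Set.Ioo 0 1) ∧
  ∀ x ∈ Set.Icc (0:ℝ) 1, u x = u 0 + ∫ t in (0:ℝ)..x, u' t

/-- `f_m(h) = (1/m)·Σ_{k=0}^{m−1} (1−h)^{2−n+k}` (for the fixed dimension `n`). -/
def fm (n m : ℕ) (h : ℝ) : ℝ :=
  (1 / (m : ℝ)) * ∑ k ∈ Finset.range m, (1 - h) ^ ((2 : ℤ) - (n : ℤ) + (k : ℤ))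

/-- `g_n(h) = f_n(h) − 2 f_{n−1}(h) + f_{n−2}(h)`. -/
def gn (n : ℕ) (h : ℝ) : ℝ := fm n n h - 2 * fm n (n - 1) h + fm n (n - 2) h

/-- `(δ,γ)` solves the system at `(n,h)`. -/
def SolvesSystem (n : ℕ) (h δ γ : ℝ) : Prop :=
  0 < δ ∧ 4 * δ ^ 2 ≤ (n : ℝ) * ((n : ℝ) - 2) ∧
  (∀ r ∈ Set.Icc h (1 - h), γ + δ * Real.log r ∈ Set.Ioo (-(π/2)) (π/2)) ∧
  (((n : ℝ) ^ 2 - 2 * (n : ℝ)) / 2 - 2 * δ ^ 2)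
      * ((n : ℝ) ^ 2 / 4 - δ ^ 2 + (n : ℝ) * δ * Real.tan (γ + δ * Real.log h))
    = (((n : ℝ) - 2) / ((n : ℝ) - 1)) * ((n : ℝ) ^ 2 / 4 + δ ^ 2) ^ 2 ∧
  ((n : ℝ) - 2) / 2 + δ * Real.tan (γ + δ * Real.log (1 - h))
    = (1 / h) * (fm n n h - gn n h * (((n : ℝ) - 2) ^ 2 / 4 + δ ^ 2))

/-- `v ∈ W_h` (with weak derivative `v'`): `v ∈ H¹(0,1)`, `v(1) = 0`, and `v` is
affine on `[0,h]` and on `[1−h,1]`. -/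
def MemWh (h : ℝ) (v v' : ℝ → ℝ) : Prop :=
  IsH1 v v' ∧ v 1 = 0 ∧
  (∃ a b : ℝ, ∀ x ∈ Set.Icc (0:ℝ) h, v x = a * x + b) ∧
  (∃ a b : ℝ, ∀ x ∈ Set.Icc (1 - h) (1:ℝ), v x = a * x + b)

/-- `μ_h^n`: the infimum of the weighted Hardy Rayleigh quotient over nonzero `v ∈ W_h`. -/
def munh (n : ℕ) (h : ℝ) : ℝ :=
  sInf { s : ℝ | ∃ v v' : ℝ → ℝ, MemWh h v v' ∧ (∃ x ∈ Set.Icc (0:ℝ) 1, v x ≠ 0) ∧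
    s = (∫ r in (0:ℝ)..1, r ^ (n - 1) * (v' r) ^ 2)
        / (∫ r in (0:ℝ)..1, r ^ (n - 3) * (v r) ^ 2) }

/-!
On `[h, 1 - h]` the trial function is `w r = r ^ (-(n - 2) / 2) * cos θ`, `θ = γ + δ log r`,
which solves the Euler–Lagrange equation `(r ^ (n - 1) w')' + c r ^ (n - 3) w = 0` for
`c = (n - 2)² / 4 + δ²`; on `[0, h]` and `[1 - h, 1]` it is continued affinely, down to `v 1 = 0`.
On the middle piece the Lagrangian `r ^ (n - 1) v'² - c r ^ (n - 3) v²` is therefore the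
derivative of `r ^ (n - 1) w w' = -cos² θ ((n - 2) / 2 + δ tan θ)` and integrates to boundary
terms. The affine pieces are integrated explicitly, and the two equations of the system say
exactly that they cancel these boundary terms: the first one at `h`, for the slope at the
critical point of the resulting quadratic, the second one at `1 - h`, where `f_m` and `g_n` enter
through `∫_{1-h}^1 r ^ (m - 1) dr = h (1 - h) ^ (n - 2) f_m(h)`. So the Lagrangian integrates to
zero over `[0, 1]`, which is the claimed identity.
-/

open scoped Interval

namespace WeightedHardy

section Splice

variable {a b p q r : ℝ} {f g k f' g' k' : ℝ → ℝ}

def splice (p q : ℝ) (f g k : ℝ → ℝ) (r : ℝ) : ℝ :=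
  if r ≤ p then f r else if r ≤ q then g r else k r

theorem splice_comp (φ : ℝ → ℝ → ℝ) :
    (fun r => φ r (splice p q f g k r)) =
      splice p q (fun r => φ r (f r)) (fun r => φ r (g r)) (fun r => φ r (k r)) := by
  funext r
  unfold splice
  split_ifs <;> rfl

theorem eqOn_splice_Iic : EqOn (splice p q f g k) f (Iic p) := fun _ hr => if_pos hr

theorem eqOn_splice_Ioc : EqOn (splice p q f g k) g (Ioc p q) := fun _ hr => by
  simp only [splice, if_neg (not_le.2 hr.1), if_pos hr.2]

theorem eqOn_splice_Ioi (hpq : p ≤ q) : EqOn (splice p q f g k) k (Ioi q) :=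
  fun _ (hr : q < _) => by
  simp only [splice, if_neg (not_le.2 (hpq.trans_lt hr)), if_neg (not_le.2 hr)]

theorem eqOn_splice_Icc (hfg : f p = g p) : EqOn (splice p q f g k) g (Icc p q) := by
  rintro r ⟨hpr, hrq⟩
  rcases hpr.eq_or_lt with rfl | hpr
  · exact (eqOn_splice_Iic self_mem_Iic).trans hfg
  · exact eqOn_splice_Ioc ⟨hpr, hrq⟩

theorem eqOn_splice_Ici (hpq : p < q) (hgk : g q = k q) :
    EqOn (splice p q f g k) k (Ici q) := by
  intro r hqr
  rcases (show q ≤ r from hqr).eq_or_lt with rfl | hqr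
  · exact (eqOn_splice_Ioc ⟨hpq, le_rfl⟩).trans hgk
  · exact eqOn_splice_Ioi hpq.le hqr

theorem continuousOn_splice (hap : a ≤ p) (hpq : p < q) (hqb : q ≤ b)
    (hf : ContinuousOn f (Icc a p)) (hg : ContinuousOn g (Icc p q))
    (hk : ContinuousOn k (Icc q b)) (hfg : f p = g p) (hgk : g q = k q) :
    ContinuousOn (splice p q f g k) (Icc a b) := by
  rw [← Icc_union_Icc_eq_Icc (hap.trans hpq.le) hqb, ← Icc_union_Icc_eq_Icc hap hpq.le]
  refine ((hf.congr ?_).union_of_isClosed (hg.congr ?_) isClosed_Icc isClosed_Icc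
    ).union_of_isClosed (hk.congr ?_) (isClosed_Icc.union isClosed_Icc) isClosed_Icc
  · exact eqOn_splice_Iic.mono Icc_subset_Iic_self
  · exact eqOn_splice_Icc hfg
  · exact (eqOn_splice_Ici hpq hgk).mono Icc_subset_Ici_self

theorem hasDerivAt_splice (hpq : p ≤ q) (hrp : r ≠ p) (hrq : r ≠ q)
    (hf : r < p → HasDerivAt f (f' r) r) (hg : p < r → r < q → HasDerivAt g (g' r) r)
    (hk : q < r → HasDerivAt k (k' r) r) :
    HasDerivAt (splice p q f g k) (splice p q f' g' k' r) r := by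
  rcases hrp.lt_or_gt with hrp | hrp
  · rw [eqOn_splice_Iic hrp.le]
    exact (hf hrp).congr_of_eventuallyEq <|
      eventually_of_mem (Iio_mem_nhds hrp) fun _ (hx : _ < p) => eqOn_splice_Iic hx.le
  rcases hrq.lt_or_gt with hrq | hrq
  · rw [eqOn_splice_Ioc ⟨hrp, hrq.le⟩]
    exact (hg hrp hrq).congr_of_eventuallyEq <|
      eventually_of_mem (Ioo_mem_nhds hrp hrq) fun _ hx => eqOn_splice_Ioc ⟨hx.1, hx.2.le⟩
  · rw [eqOn_splice_Ioi hpq hrq]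
    exact (hk hrq).congr_of_eventuallyEq <|
      eventually_of_mem (Ioi_mem_nhds hrq) fun _ hx => eqOn_splice_Ioi hpq hx

theorem eqOn_splice_uIoc (hap : a ≤ p) (hpq : p ≤ q) (hqb : q ≤ b) :
    EqOn (splice p q f g k) f (Ι a p) ∧ EqOn (splice p q f g k) g (Ι p q) ∧
      EqOn (splice p q f g k) k (Ι q b) := by
  rw [uIoc_of_le hap, uIoc_of_le hpq, uIoc_of_le hqb]
  exact ⟨eqOn_splice_Iic.mono Ioc_subset_Iic_self, eqOn_splice_Ioc,
    (eqOn_splice_Ioi hpq).mono Ioc_subset_Ioi_self⟩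

theorem intervalIntegrable_splice (hap : a ≤ p) (hpq : p ≤ q) (hqb : q ≤ b)
    (hf : IntervalIntegrable f volume a p) (hg : IntervalIntegrable g volume p q)
    (hk : IntervalIntegrable k volume q b) :
    IntervalIntegrable (splice p q f g k) volume a b := by
  obtain ⟨ef, eg, ek⟩ := eqOn_splice_uIoc (f := f) (g := g) (k := k) hap hpq hqb
  exact (((intervalIntegrable_congr ef).2 hf).trans ((intervalIntegrable_congr eg).2 hg)).trans
    ((intervalIntegrable_congr ek).2 hk)

theorem integral_splice (hap : a ≤ p) (hpq : p ≤ q) (hqb : q ≤ b)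
    (hf : IntervalIntegrable f volume a p) (hg : IntervalIntegrable g volume p q)
    (hk : IntervalIntegrable k volume q b) :
    ∫ r in a..b, splice p q f g k r =
      (∫ r in a..p, f r) + (∫ r in p..q, g r) + ∫ r in q..b, k r := by
  obtain ⟨ef, eg, ek⟩ := eqOn_splice_uIoc (f := f) (g := g) (k := k) hap hpq hqb
  have hf' := (intervalIntegrable_congr ef).2 hf
  have hg' := (intervalIntegrable_congr eg).2 hg
  have hk' := (intervalIntegrable_congr ek).2 hk
  rw [← intervalIntegral.integral_add_adjacent_intervals (hf'.trans hg') hk',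
    ← intervalIntegral.integral_add_adjacent_intervals hf' hg',
    intervalIntegral.integral_congr_ae (ae_of_all _ ef),
    intervalIntegral.integral_congr_ae (ae_of_all _ eg),
    intervalIntegral.integral_congr_ae (ae_of_all _ ek)]

end Splice

theorem isH1_of_hasDerivAt_off_countable {u u' : ℝ → ℝ} {s : Set ℝ} (hs : s.Countable)
    (hc : ContinuousOn u (Icc 0 1)) (hd : ∀ x ∈ Ioo 0 1 \ s, HasDerivAt u (u' x) x)
    (hi : IntervalIntegrable u' volume 0 1)
    (hi2 : IntervalIntegrable (fun t => u' t ^ 2) volume 0 1) : IsH1 u u' := by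
  refine ⟨hc, hi, (intervalIntegrable_iff_integrableOn_Ioo_of_le zero_le_one).1 hi2,
    fun x hx => ?_⟩
  rw [integral_eq_of_hasDerivAt_off_countable_of_le u u' hx.1 hs
    (hc.mono (Icc_subset_Icc_right hx.2))
    (fun y hy => hd y ⟨⟨hy.1.1, hy.1.2.trans_le hx.2⟩, hy.2⟩)
    (hi.mono_set (uIcc_subset_uIcc_left (by rwa [uIcc_of_le zero_le_one])))]
  ring

theorem integral_pow_mul_sq_pos {u : ℝ → ℝ} (k : ℕ) (hu : ContinuousOn u (Icc 0 1))
    {x : ℝ} (hx : x ∈ Ioc 0 1) (hux : u x ≠ 0) : 0 < ∫ r in (0:ℝ)..1, r ^ k * u r ^ 2 :=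
  intervalIntegral.integral_pos zero_lt_one ((continuousOn_pow k).mul (hu.pow 2))
    (fun _ hr => mul_nonneg (pow_nonneg hr.1.le k) (sq_nonneg _))
    ⟨x, Ioc_subset_Icc_self hx, mul_pos (pow_pos hx.1 k) (pow_two_pos_of_ne_zero hux)⟩

theorem munh_le_of_integral_eq {n : ℕ} {h c : ℝ} {v v' : ℝ → ℝ} (hv : MemWh h v v')
    {x : ℝ} (hx : x ∈ Ioc 0 1) (hvx : v x ≠ 0)
    (hvc : (∫ r in (0:ℝ)..1, r ^ (n - 1) * (v' r) ^ 2)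
      = c * ∫ r in (0:ℝ)..1, r ^ (n - 3) * (v r) ^ 2) :
    munh n h ≤ c := by
  have hD := integral_pow_mul_sq_pos (n - 3) hv.1.1 hx hvx
  refine csInf_le ⟨0, ?_⟩ ⟨v, v', hv, ⟨x, Ioc_subset_Icc_self hx, hvx⟩, ?_⟩
  · rintro _ ⟨w, w', -, -, rfl⟩
    exact div_nonneg
      (intervalIntegral.integral_nonneg zero_le_one fun _ hr =>
        mul_nonneg (pow_nonneg hr.1 _) (sq_nonneg _))
      (intervalIntegral.integral_nonneg zero_le_one fun _ hr =>
        mul_nonneg (pow_nonneg hr.1 _) (sq_nonneg _))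
  · rw [hvc, mul_div_cancel_right₀ _ hD.ne']

def lagrangian (n : ℕ) (c : ℝ) (u u' : ℝ → ℝ) (r : ℝ) : ℝ :=
  r ^ (n - 1) * u' r ^ 2 - c * (r ^ (n - 3) * u r ^ 2)

theorem lagrangian_splice {n : ℕ} {c p q : ℝ} {f g k f' g' k' : ℝ → ℝ} :
    lagrangian n c (splice p q f g k) (splice p q f' g' k') =
      splice p q (lagrangian n c f f') (lagrangian n c g g') (lagrangian n c k k') := by
  funext r
  unfold lagrangian splice
  split_ifs <;> rfl

theorem continuousOn_lagrangian {n : ℕ} {c : ℝ} {u u' : ℝ → ℝ} {s : Set ℝ}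
    (hu : ContinuousOn u s) (hu' : ContinuousOn u' s) :
    ContinuousOn (lagrangian n c u u') s :=
  ((continuousOn_pow _).mul (hu'.pow 2)).sub (continuousOn_const.mul
    ((continuousOn_pow _).mul (hu.pow 2)))

theorem integral_lagrangian_of_isH1 {n : ℕ} (c : ℝ) {u u' : ℝ → ℝ} (hu : IsH1 u u') :
    ∫ r in (0:ℝ)..1, lagrangian n c u u' r =
      (∫ r in (0:ℝ)..1, r ^ (n - 1) * (u' r) ^ 2)
        - c * ∫ r in (0:ℝ)..1, r ^ (n - 3) * (u r) ^ 2 := by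
  have hN : IntervalIntegrable (fun r => r ^ (n - 1) * u' r ^ 2) volume 0 1 :=
    ((intervalIntegrable_iff_integrableOn_Ioo_of_le zero_le_one).2 hu.2.2.1).continuousOn_mul
      (continuousOn_pow _)
  have hD : IntervalIntegrable (fun r => r ^ (n - 3) * u r ^ 2) volume 0 1 :=
    ((continuousOn_pow _).mul (hu.1.pow 2)).intervalIntegrable_of_Icc zero_le_one
  rw [← intervalIntegral.integral_const_mul,
    ← intervalIntegral.integral_sub hN (hD.const_mul c)]
  rfl

section Profile

variable {n : ℕ} {δ γ r : ℝ}

def phase (δ γ r : ℝ) : ℝ := γ + δ * log r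

def profile (n : ℕ) (δ γ r : ℝ) : ℝ := r ^ (-(((n : ℝ) - 2) / 2)) * cos (phase δ γ r)

def profileDeriv (n : ℕ) (δ γ r : ℝ) : ℝ :=
  -(r ^ (-(((n : ℝ) - 2) / 2) - 1) *
    (((n : ℝ) - 2) / 2 * cos (phase δ γ r) + δ * sin (phase δ γ r)))

-- `flux n δ γ r = -r ^ (n - 1) * profile n δ γ r * profileDeriv n δ γ r`
def flux (n : ℕ) (δ γ r : ℝ) : ℝ :=
  (((n : ℝ) - 2) / 2 * cos (phase δ γ r) + δ * sin (phase δ γ r)) * cos (phase δ γ r)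

theorem hasDerivAt_phase (hr : 0 < r) : HasDerivAt (phase δ γ) (δ / r) r := by
  rw [div_eq_mul_inv]
  exact ((hasDerivAt_log hr.ne').const_mul δ).const_add γ

theorem hasDerivAt_profile (hr : 0 < r) :
    HasDerivAt (profile n δ γ) (profileDeriv n δ γ r) r := by
  have hpow := hasDerivAt_rpow_const (x := r) (p := -(((n : ℝ) - 2) / 2)) (Or.inl hr.ne')
  refine (hpow.mul (hasDerivAt_phase hr).cos).congr_deriv ?_
  rw [profileDeriv, rpow_sub_one hr.ne']
  field_simp
  ring

theorem continuousOn_phase : ContinuousOn (phase δ γ) (Ioi 0) :=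
  continuousOn_const.add (continuousOn_const.mul (continuousOn_log.mono fun _ hx => ne_of_gt hx))

theorem continuousOn_profile : ContinuousOn (profile n δ γ) (Ioi 0) :=
  (continuousOn_id.rpow_const fun _ hx => Or.inl (ne_of_gt hx)).mul
    (continuous_cos.comp_continuousOn continuousOn_phase)

theorem continuousOn_profileDeriv : ContinuousOn (profileDeriv n δ γ) (Ioi 0) :=
  ((continuousOn_id.rpow_const fun _ hx => Or.inl (ne_of_gt hx)).mul
    ((continuousOn_const.mul (continuous_cos.comp_continuousOn continuousOn_phase)).add
      (continuousOn_const.mul (continuous_sin.comp_continuousOn continuousOn_phase)))).neg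

theorem pow_mul_rpow_sq (hr : 0 < r) (k : ℕ) (x : ℝ) :
    r ^ k * (r ^ x) ^ 2 = r ^ ((k : ℝ) + 2 * x) := by
  rw [rpow_add hr, rpow_natCast, ← rpow_natCast (r ^ x), ← rpow_mul hr.le]
  norm_num [mul_comm]

theorem profile_sq_mul_pow (hn : 2 ≤ n) (hr : 0 < r) :
    profile n δ γ r ^ 2 * r ^ (n - 2) = cos (phase δ γ r) ^ 2 := by
  rw [profile, mul_pow, mul_comm, ← mul_assoc, pow_mul_rpow_sq hr, Nat.cast_sub hn]
  have : ((n : ℝ) - (2 : ℕ)) + 2 * -(((n : ℝ) - 2) / 2) = 0 := by push_cast; ring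
  rw [this, rpow_zero, one_mul]

theorem lagrangian_profile (hn : 3 ≤ n) (hr : 0 < r) :
    lagrangian n (((n : ℝ) - 2) ^ 2 / 4 + δ ^ 2) (profile n δ γ) (profileDeriv n δ γ) r =
      δ * (δ * (sin (phase δ γ r) ^ 2 - cos (phase δ γ r) ^ 2)
        + ((n : ℝ) - 2) * sin (phase δ γ r) * cos (phase δ γ r)) / r := by
  have h1 : r ^ (n - 1) * (r ^ (-(((n : ℝ) - 2) / 2) - 1)) ^ 2 = r⁻¹ := by
    rw [pow_mul_rpow_sq hr, Nat.cast_sub (by omega), ← rpow_neg_one]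
    congr 1
    push_cast
    ring
  have h3 : r ^ (n - 3) * (r ^ (-(((n : ℝ) - 2) / 2))) ^ 2 = r⁻¹ := by
    rw [pow_mul_rpow_sq hr, Nat.cast_sub hn, ← rpow_neg_one]
    congr 1
    push_cast
    ring
  simp only [lagrangian, profile, profileDeriv, neg_sq, mul_pow]
  rw [← mul_assoc, h1, ← mul_assoc (r ^ (n - 3)), h3]
  field_simp
  ring

theorem hasDerivAt_flux (hn : 3 ≤ n) (hr : 0 < r) :
    HasDerivAt (flux n δ γ)
      (-lagrangian n (((n : ℝ) - 2) ^ 2 / 4 + δ ^ 2) (profile n δ γ) (profileDeriv n δ γ) r)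
      r := by
  have hθ := hasDerivAt_phase (δ := δ) (γ := γ) hr
  refine (((hθ.cos.const_mul _).add (hθ.sin.const_mul δ)).mul hθ.cos).congr_deriv ?_
  simp only [Pi.add_apply, lagrangian_profile hn hr]
  field_simp
  ring

theorem integral_lagrangian_profile (hn : 3 ≤ n) {p q : ℝ} (hp : 0 < p) (hpq : p ≤ q) :
    ∫ r in p..q,
        lagrangian n (((n : ℝ) - 2) ^ 2 / 4 + δ ^ 2) (profile n δ γ) (profileDeriv n δ γ) r
      = flux n δ γ p - flux n δ γ q := by
  have hpos : uIcc p q ⊆ Ioi 0 := by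
    rw [uIcc_of_le hpq]
    exact fun _ hx => hp.trans_le hx.1
  rw [intervalIntegral.integral_eq_sub_of_hasDerivAt (f := -flux n δ γ)
    (fun r hr => (hasDerivAt_flux hn (hpos hr)).neg.congr_deriv (neg_neg _))
    ((continuousOn_lagrangian continuousOn_profile continuousOn_profileDeriv).mono
      hpos).intervalIntegrable, Pi.neg_apply, Pi.neg_apply]
  ring

theorem flux_eq_cos_sq_mul (hcos : cos (phase δ γ r) ≠ 0) :
    flux n δ γ r =
      cos (phase δ γ r) ^ 2 * (((n : ℝ) - 2) / 2 + δ * tan (phase δ γ r)) := by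
  rw [flux, tan_eq_sin_div_cos]
  field_simp

end Profile

theorem integral_lagrangian_affine {n : ℕ} (hn : 3 ≤ n) (c A B p q : ℝ) :
    ∫ r in p..q, lagrangian n c (fun r => A * r + B) (fun _ => A) r =
      A ^ 2 * (q ^ n - p ^ n) / n - c * (A ^ 2 * (q ^ n - p ^ n) / n
        + 2 * A * B * (q ^ (n - 1) - p ^ (n - 1)) / ((n : ℝ) - 1)
        + B ^ 2 * (q ^ (n - 2) - p ^ (n - 2)) / ((n : ℝ) - 2)) := by
  obtain ⟨k, rfl⟩ := Nat.exists_eq_add_of_le' hn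
  have hL : ∀ r : ℝ, lagrangian (k + 3) c (fun r => A * r + B) (fun _ => A) r =
      (A ^ 2 - c * A ^ 2) * r ^ (k + 2) - (2 * c * A * B) * r ^ (k + 1)
        - (c * B ^ 2) * r ^ k := by
    intro r
    simp only [lagrangian, show k + 3 - 1 = k + 2 by omega, show k + 3 - 3 = k by omega]
    ring
  simp only [hL, show k + 3 - 1 = k + 2 by omega, show k + 3 - 2 = k + 1 by omega]
  rw [intervalIntegral.integral_sub, intervalIntegral.integral_sub,
    intervalIntegral.integral_const_mul, intervalIntegral.integral_const_mul,
    intervalIntegral.integral_const_mul, integral_pow, integral_pow, integral_pow]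
  · have : (k : ℝ) + 1 ≠ 0 := by positivity
    have : (k : ℝ) + 2 ≠ 0 := by positivity
    push_cast
    simp only [show (k : ℝ) + 3 - 1 = k + 2 by ring, show (k : ℝ) + 3 - 2 = k + 1 by ring]
    field_simp
    ring
  all_goals exact Continuous.intervalIntegrable (by fun_prop) _ _

-- `∫ t in 0..1, lagrangian n c (fun t => 1 - s + s * t) (fun _ => s) t`
def unitAffineDefect (n : ℕ) (c s : ℝ) : ℝ :=
  s ^ 2 / n - c * (s ^ 2 / n + 2 * s * (1 - s) / ((n : ℝ) - 1) + (1 - s) ^ 2 / ((n : ℝ) - 2))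

theorem integral_lagrangian_left {n : ℕ} (hn : 3 ≤ n) {h : ℝ} (hh : 0 < h) (c R s : ℝ) :
    ∫ r in (0:ℝ)..h,
        lagrangian n c (fun r => R * s / h * r + R * (1 - s)) (fun _ => R * s / h) r
      = R ^ 2 * h ^ (n - 2) * unitAffineDefect n c s := by
  rw [integral_lagrangian_affine hn]
  obtain ⟨k, rfl⟩ := Nat.exists_eq_add_of_le' hn
  simp only [show k + 3 - 1 = k + 2 by omega, show k + 3 - 2 = k + 1 by omega, unitAffineDefect]
  rw [zero_pow (by omega), zero_pow (by omega), zero_pow (by omega)]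
  push_cast
  field_simp
  ring

theorem fm_eq {n m : ℕ} (hn : 2 ≤ n) (hm : m ≠ 0) {h : ℝ} (h0 : 0 < h) (h1 : h < 1) :
    fm n m h = (1 - (1 - h) ^ m) / (m * (h * (1 - h) ^ (n - 2))) := by
  have hx : (1 - h) ≠ 0 := by linarith
  have hpow : ∀ k : ℕ, (1 - h) ^ ((2 : ℤ) - n + k) = (1 - h) ^ k / (1 - h) ^ (n - 2) := by
    intro k
    rw [eq_div_iff (pow_ne_zero _ hx), ← zpow_natCast, ← zpow_natCast, ← zpow_add₀ hx]
    congr 1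
    push_cast [Nat.cast_sub hn]
    ring
  rw [fm, Finset.sum_congr rfl fun k _ => hpow k, ← Finset.sum_div, ← geom_sum_mul_neg,
    sub_sub_cancel]
  field_simp

theorem integral_lagrangian_right {n : ℕ} (hn : 3 ≤ n) {h : ℝ} (h0 : 0 < h) (h1 : h < 1)
    (c R : ℝ) :
    ∫ r in (1 - h)..1, lagrangian n c (fun r => -(R / h) * r + R / h) (fun _ => -(R / h)) r
      = R ^ 2 * (1 - h) ^ (n - 2) * (fm n n h - c * gn n h) / h := by
  have hx : (1 - h) ≠ 0 := by linarith
  rw [integral_lagrangian_affine hn, gn, fm_eq (by omega) (by omega) h0 h1,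
    fm_eq (m := n - 1) (by omega) (by omega) h0 h1,
    fm_eq (m := n - 2) (by omega) (by omega) h0 h1]
  obtain ⟨k, rfl⟩ := Nat.exists_eq_add_of_le' hn
  simp only [show k + 3 - 1 = k + 2 by omega, show k + 3 - 2 = k + 1 by omega, one_pow]
  have : (k : ℝ) + 1 ≠ 0 := by positivity
  have : (k : ℝ) + 2 ≠ 0 := by positivity
  push_cast
  simp only [show (k : ℝ) + 3 - 1 = k + 2 by ring, show (k : ℝ) + 3 - 2 = k + 1 by ring]
  field_simp
  ring

-- `s = -n c / K` is the critical point of the quadratic `unitAffineDefect n c`.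
theorem unitAffineDefect_eq {n : ℕ} (hn : 3 ≤ n) {δ t : ℝ}
    (heq : (((n : ℝ) ^ 2 - 2 * (n : ℝ)) / 2 - 2 * δ ^ 2)
        * ((n : ℝ) ^ 2 / 4 - δ ^ 2 + (n : ℝ) * δ * t)
      = (((n : ℝ) - 2) / ((n : ℝ) - 1)) * ((n : ℝ) ^ 2 / 4 + δ ^ 2) ^ 2) :
    unitAffineDefect n (((n : ℝ) - 2) ^ 2 / 4 + δ ^ 2)
        (-(n : ℝ) * (((n : ℝ) - 2) ^ 2 / 4 + δ ^ 2)
          / (((n : ℝ) ^ 2 - 2 * (n : ℝ)) / 2 - 2 * δ ^ 2))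
      = -(((n : ℝ) - 2) / 2 + δ * t) := by
  have hx : (3 : ℝ) ≤ n := by exact_mod_cast hn
  have hx0 : (n : ℝ) ≠ 0 := by positivity
  have hx1 : (n : ℝ) - 1 ≠ 0 := by linarith
  have hx2 : (n : ℝ) - 2 ≠ 0 := by linarith
  set K := ((n : ℝ) ^ 2 - 2 * (n : ℝ)) / 2 - 2 * δ ^ 2 with hK_def
  have hK : K ≠ 0 := by
    intro hK
    rw [hK, zero_mul] at heq
    have : 0 < (n : ℝ) ^ 2 / 4 + δ ^ 2 := by positivity
    have : 0 < (((n : ℝ) - 2) / ((n : ℝ) - 1)) * ((n : ℝ) ^ 2 / 4 + δ ^ 2) ^ 2 :=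
      mul_pos (div_pos (by linarith) (by linarith)) (by positivity)
    linarith
  have ht : δ * t = ((((n : ℝ) - 2) / ((n : ℝ) - 1)) * ((n : ℝ) ^ 2 / 4 + δ ^ 2) ^ 2 / K
      - (n : ℝ) ^ 2 / 4 + δ ^ 2) / n := by
    field_simp at heq ⊢
    linear_combination heq
  rw [unitAffineDefect, ht]
  field_simp
  rw [hK_def]
  ring

def trialFun (n : ℕ) (δ γ h s : ℝ) : ℝ → ℝ :=
  splice h (1 - h) (fun r => profile n δ γ h * s / h * r + profile n δ γ h * (1 - s))
    (profile n δ γ) (fun r => -(profile n δ γ (1 - h) / h) * r + profile n δ γ (1 - h) / h)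

def trialDeriv (n : ℕ) (δ γ h s : ℝ) : ℝ → ℝ :=
  splice h (1 - h) (fun _ => profile n δ γ h * s / h) (profileDeriv n δ γ)
    (fun _ => -(profile n δ γ (1 - h) / h))

section Trial

variable {n : ℕ} {δ γ h s : ℝ}

theorem trialFun_self (hh : 0 < h) : trialFun n δ γ h s h = profile n δ γ h := by
  rw [trialFun, eqOn_splice_Iic self_mem_Iic]
  field_simp
  ring

theorem memWh_trialFun (hh0 : 0 < h) (hh1 : h < 1 / 2) :
    MemWh h (trialFun n δ γ h s) (trialDeriv n δ γ h s) := by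
  have hlt : h < 1 - h := by linarith
  have hpos : Icc h (1 - h) ⊆ Ioi 0 := fun _ hr => hh0.trans_le hr.1
  have hleft : profile n δ γ h * s / h * h + profile n δ γ h * (1 - s) = profile n δ γ h := by
    field_simp
    ring
  have hright : profile n δ γ (1 - h) =
      -(profile n δ γ (1 - h) / h) * (1 - h) + profile n δ γ (1 - h) / h := by
    field_simp
    ring
  have hcont : ContinuousOn (trialFun n δ γ h s) (Icc 0 1) :=
    continuousOn_splice hh0.le hlt (by linarith) (by fun_prop) (continuousOn_profile.mono hpos)
      (by fun_prop) hleft hright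
  have hint : ∀ F : ℝ → ℝ, Continuous F →
      IntervalIntegrable (fun r => F (trialDeriv n δ γ h s r)) volume 0 1 := by
    intro F hF
    rw [trialDeriv, splice_comp fun _ y => F y]
    exact intervalIntegrable_splice hh0.le hlt.le (by linarith)
      (Continuous.intervalIntegrable (by fun_prop) _ _)
      ((hF.comp_continuousOn (continuousOn_profileDeriv.mono hpos)).intervalIntegrable_of_Icc
        hlt.le)
      (Continuous.intervalIntegrable (by fun_prop) _ _)
  refine ⟨isH1_of_hasDerivAt_off_countable (s := {h, 1 - h})
      ((finite_singleton _).insert _).countable hcont ?_ (hint id continuous_id)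
      (hint (· ^ 2) (continuous_pow 2)), ?_, ⟨_, _, fun x hx => eqOn_splice_Iic hx.2⟩,
      ⟨_, _, fun x hx => eqOn_splice_Ici hlt hright hx.1⟩⟩
  · rintro x ⟨hx, hxs⟩
    simp only [mem_insert_iff, mem_singleton_iff, not_or] at hxs
    refine hasDerivAt_splice hlt.le hxs.1 hxs.2 (fun _ => ?_)
      (fun hx' _ => hasDerivAt_profile (hh0.trans hx')) (fun _ => ?_)
    · simpa using ((hasDerivAt_id x).const_mul (profile n δ γ h * s / h)).add_const
        (profile n δ γ h * (1 - s))
    · simpa using ((hasDerivAt_id x).const_mul (-(profile n δ γ (1 - h) / h))).add_const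
        (profile n δ γ (1 - h) / h)
  · rw [trialFun, eqOn_splice_Ioi hlt.le (show 1 - h < 1 by linarith)]
    ring

theorem integral_lagrangian_trialFun (hn : 3 ≤ n) (hh0 : 0 < h) (hh1 : h < 1 / 2) :
    ∫ r in (0:ℝ)..1, lagrangian n (((n : ℝ) - 2) ^ 2 / 4 + δ ^ 2)
        (trialFun n δ γ h s) (trialDeriv n δ γ h s) r
      = cos (phase δ γ h) ^ 2 * unitAffineDefect n (((n : ℝ) - 2) ^ 2 / 4 + δ ^ 2) s
        + (flux n δ γ h - flux n δ γ (1 - h))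
        + cos (phase δ γ (1 - h)) ^ 2
          * (fm n n h - (((n : ℝ) - 2) ^ 2 / 4 + δ ^ 2) * gn n h) / h := by
  have hlt : h < 1 - h := by linarith
  have hpos : uIcc h (1 - h) ⊆ Ioi 0 := by
    rw [uIcc_of_le hlt.le]
    exact fun _ hr => hh0.trans_le hr.1
  rw [trialFun, trialDeriv, lagrangian_splice, integral_splice hh0.le hlt.le (by linarith),
    integral_lagrangian_left hn hh0, integral_lagrangian_profile hn hh0 hlt.le,
    integral_lagrangian_right hn hh0 (by linarith), profile_sq_mul_pow (by omega) hh0,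
    profile_sq_mul_pow (by omega) (by linarith)]
  · exact (continuousOn_lagrangian (by fun_prop) (by fun_prop)).intervalIntegrable
  · exact ((continuousOn_lagrangian continuousOn_profile continuousOn_profileDeriv).mono
      hpos).intervalIntegrable
  · exact (continuousOn_lagrangian (by fun_prop) (by fun_prop)).intervalIntegrable

end Trial

end WeightedHardy

open WeightedHardy

/-- If `(δ,γ)` solves the system at `(n,h)`, then there is a nonzero `v ∈ W_h` with
`∫₀¹ r^{n−1} v'² = (S^n + δ²)·∫₀¹ r^{n−3} v²`; in particular `μ_h^n ≤ S^n + δ²`. -/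
theorem Wh_hardy_upper_bound (n : ℕ) (hn : 3 ≤ n) (h δ γ : ℝ) (hh0 : 0 < h) (hh1 : h < 1/2)
    (hsol : SolvesSystem n h δ γ) :
    (∃ v v' : ℝ → ℝ, MemWh h v v' ∧ (∃ x ∈ Set.Icc (0:ℝ) 1, v x ≠ 0) ∧
      (∫ r in (0:ℝ)..1, r ^ (n - 1) * (v' r) ^ 2)
        = (((n : ℝ) - 2) ^ 2 / 4 + δ ^ 2) * ∫ r in (0:ℝ)..1, r ^ (n - 3) * (v r) ^ 2) ∧
    munh n h ≤ ((n : ℝ) - 2) ^ 2 / 4 + δ ^ 2 := by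
  obtain ⟨-, -, hrange, hleft, hright⟩ := hsol
  have hcos : ∀ r ∈ Icc h (1 - h), cos (phase δ γ r) ≠ 0 := fun r hr =>
    (cos_pos_of_mem_Ioo (hrange r hr)).ne'
  set s := -(n : ℝ) * (((n : ℝ) - 2) ^ 2 / 4 + δ ^ 2)
    / (((n : ℝ) ^ 2 - 2 * (n : ℝ)) / 2 - 2 * δ ^ 2)
  have hv := memWh_trialFun (n := n) (δ := δ) (γ := γ) (s := s) hh0 hh1
  have hvh : trialFun n δ γ h s h ≠ 0 := by
    rw [trialFun_self hh0, profile]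
    exact mul_ne_zero (rpow_pos_of_pos hh0 _).ne' (hcos h ⟨le_rfl, by linarith⟩)
  have hL := integral_lagrangian_trialFun (δ := δ) (γ := γ) (s := s) hn hh0 hh1
  rw [integral_lagrangian_of_isH1 _ hv.1, unitAffineDefect_eq hn hleft,
    flux_eq_cos_sq_mul (hcos h ⟨le_rfl, by linarith⟩),
    flux_eq_cos_sq_mul (hcos (1 - h) ⟨by linarith, le_rfl⟩)] at hL
  have hN : (∫ r in (0:ℝ)..1, r ^ (n - 1) * (trialDeriv n δ γ h s r) ^ 2)
      = (((n : ℝ) - 2) ^ 2 / 4 + δ ^ 2)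
        * ∫ r in (0:ℝ)..1, r ^ (n - 3) * (trialFun n δ γ h s r) ^ 2 := by
    unfold phase at hL
    linear_combination hL - cos (γ + δ * log (1 - h)) ^ 2 * hright
  exact ⟨⟨_, _, hv, ⟨h, ⟨hh0.le, by linarith⟩, hvh⟩, hN⟩,
    munh_le_of_integral_eq hv ⟨hh0, by linarith⟩ hvh hN⟩
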